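/- Let K be a field with char K ≠ 2, n ≥ 1, and Ω = [[0, I_n],[−I_n, 0]] ∈ M_{2n×2n}(K). Suppose A ∈ M_{2n×2n}(K) satisfies Aᵀ = Ω A Ω⁻¹ and all eigenvalues of A are in K. Then there exists a symplectic matrix C (Cᵀ Ω C = Ω) such that C⁻¹ A C = [[B, 0],[0, Bᵀ]] for some B ∈ M_{n×n}(K) in Jordan normal form. -/

import Mathlib

/-- A square matrix is in Jordan normal form: it vanishes off the diagonal and
superdiagonal, each superdiagonal entry is `0` or `1`, and a superdiagonal `1`
only links equal diagonal entries (i.e. it lies inside a Jordan block). -/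
def IsJordanNormalForm {n : ℕ} {K : Type*} [Field K]
    (B : Matrix (Fin n) (Fin n) K) : Prop :=
  (∀ i j : Fin n, (j : ℕ) ≠ (i : ℕ) → (j : ℕ) ≠ (i : ℕ) + 1 → B i j = 0) ∧
  (∀ i j : Fin n, (j : ℕ) = (i : ℕ) + 1 → B i j = 0 ∨ (B i j = 1 ∧ B i i = B j j))

/-!
With `ω x y = xᵀ Ω y`, the form `ω` is skew and nondegenerate, and `Aᵀ = Ω A Ω⁻¹` says that `A`
is `ω`-self-adjoint. Generalized eigenspaces of a self-adjoint map for distinct eigenvalues are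
`ω`-orthogonal, so `ω` stays nondegenerate on each of them. On the generalized eigenspace of `λ`
the map `N = A - λ` is nilpotent and self-adjoint; if `m` is its nilpotency index, there are `v, w`
with `ω v (N ^ k w) = δ (k, m - 1)`, and the chains `N ^ (m - 1 - i) v`, `N ^ i w` form a symplectic
basis of a `2m`-dimensional subspace on which `A` acts by the Jordan block `J_m(λ)` and its
transpose (their isotropy is where `char K ≠ 2` enters). The `ω`-orthogonal complement of that
subspace is again `A`-invariant and nondegenerate, and induction on the dimension yields a
symplectic basis in which `A = diag(B, Bᵀ)`; the basis vectors are the columns of `C`.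
-/

open Module Polynomial LinearMap
open scoped Matrix

section

variable {K V : Type*} [Field K] [AddCommGroup V] [Module K V]

namespace Module.End

theorem ker_aeval_le_iSup_maxGenEigenspace (T : End K V) {p : K[X]} (hp : p ≠ 0)
    (hs : p.Splits) : ker (aeval T p) ≤ ⨆ μ, T.maxGenEigenspace μ := by
  induction h : p.natDegree using Nat.strong_induction_on generalizing p with
  | _ d ih =>
  by_cases hd : p.natDegree = 0
  · obtain ⟨c, rfl⟩ := natDegree_eq_zero.mp hd
    have hc : c ≠ 0 := by simpa using hp
    intro x hx
    have : c • x = 0 := by simpa [Algebra.algebraMap_eq_smul_one] using hx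
    simp [(smul_eq_zero.mp this).resolve_left hc]
  obtain ⟨l, hl⟩ := hs.exists_eval_eq_zero fun h => hd (natDegree_eq_of_degree_eq_some h)
  obtain ⟨q, hpq, hndvd⟩ := p.exists_eq_pow_rootMultiplicity_mul_and_not_dvd hp l
  have hroot : 0 < p.rootMultiplicity l := (rootMultiplicity_pos hp).mpr (by simpa using hl)
  have hq : q ≠ 0 := by rintro rfl; simp at hpq; exact hp hpq
  have hco : IsCoprime ((X - C l) ^ p.rootMultiplicity l) q :=
    ((irreducible_X_sub_C l).coprime_iff_not_dvd.mpr hndvd).pow_left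
  rw [hpq, ← sup_ker_aeval_eq_ker_aeval_mul_of_coprime T hco]
  refine sup_le (fun x hx => Submodule.mem_iSup_of_mem l ?_) ?_
  · rw [mem_maxGenEigenspace]
    exact ⟨_, by simpa [Algebra.algebraMap_eq_smul_one] using hx⟩
  · refine ih _ ?_ hq (hs.of_dvd hp (hpq ▸ dvd_mul_left q _)) rfl
    rw [← h, hpq, natDegree_mul (pow_ne_zero _ (X_sub_C_ne_zero l)) hq]
    simp [hroot]

theorem iSup_maxGenEigenspace_eq_top_of_splits [FiniteDimensional K V] (T : End K V)
    (h : T.charpoly.Splits) : ⨆ μ, T.maxGenEigenspace μ = ⊤ :=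
  eq_top_iff.mpr fun x _ => ker_aeval_le_iSup_maxGenEigenspace T (charpoly_monic T).ne_zero h
    (by simp [aeval_self_charpoly])

end Module.End

namespace LinearMap.IsAdjointPair

variable {ω : LinearMap.BilinForm K V} {T : Module.End K V}

theorem pow (h : IsAdjointPair ω ω T T) (k : ℕ) : IsAdjointPair ω ω ⇑(T ^ k) ⇑(T ^ k) := by
  induction k with
  | zero => exact isAdjointPair_one
  | succ k ih => simpa only [← pow_succ, ← pow_succ'] using ih.mul h

theorem aeval (h : IsAdjointPair ω ω T T) (p : K[X]) :
    IsAdjointPair ω ω ⇑(aeval T p) ⇑(aeval T p) := by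
  induction p using Polynomial.induction_on' with
  | add p q hp hq => intro x y; simp only [map_add, LinearMap.add_apply, hp x y, hq x y]
  | monomial k a =>
    simpa only [aeval_monomial, ← Algebra.smul_def, LinearMap.coe_smul] using (h.pow k).smul a

theorem eq_zero_of_mem_maxGenEigenspace (h : IsAdjointPair ω ω T T) {l μ : K} (hlμ : l ≠ μ)
    {x y : V} (hx : x ∈ T.maxGenEigenspace l) (hy : y ∈ T.maxGenEigenspace μ) : ω x y = 0 := by
  obtain ⟨a, ha⟩ := (Module.End.mem_maxGenEigenspace T l x).mp hx
  obtain ⟨b, hb⟩ := (Module.End.mem_maxGenEigenspace T μ y).mp hy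
  obtain ⟨u, v, huv⟩ : IsCoprime ((X - C l) ^ a) ((X - C μ) ^ b) :=
    ((isCoprime_X_sub_C_of_isUnit_sub (sub_ne_zero.mpr hlμ).isUnit).pow)
  have hpx : Polynomial.aeval T ((X - C l) ^ a) x = 0 := by
    simpa [Algebra.algebraMap_eq_smul_one] using ha
  have hqy : Polynomial.aeval T ((X - C μ) ^ b) y = 0 := by
    simpa [Algebra.algebraMap_eq_smul_one] using hb
  calc ω x y = ω (Polynomial.aeval T (u * (X - C l) ^ a + (X - C μ) ^ b * v) x) y := by
        simp [mul_comm _ v, huv]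
    _ = ω (Polynomial.aeval T v x) (Polynomial.aeval T ((X - C μ) ^ b) y) := by
        rw [map_add, aeval_mul, aeval_mul, LinearMap.add_apply, Module.End.mul_apply, hpx,
          map_zero, zero_add, Module.End.mul_apply, h.aeval]
    _ = 0 := by rw [hqy, map_zero]

theorem apply_pow_apply_pow_eq_zero (hchar : (2 : K) ≠ 0)
    (hω : ∀ x y, ω x y = -ω y x) (hT : IsAdjointPair ω ω T T) (p q : ℕ) (x : V) :
    ω ((T ^ p) x) ((T ^ q) x) = 0 := by
  have h : ∀ p q, ω ((T ^ p) x) ((T ^ q) x) = ω x ((T ^ (p + q)) x) := fun p q => by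
    rw [hT.pow, ← Module.End.mul_apply, ← pow_add]
  have hneg := hω ((T ^ p) x) ((T ^ q) x)
  rw [h, h, add_comm q] at hneg
  rw [h]
  exact (mul_eq_zero.mp (by linear_combination hneg : (2 : K) * _ = 0)).resolve_left hchar

theorem separatingLeft_restrict_maxGenEigenspace (hT : IsAdjointPair ω ω T T)
    (hsep : ω.SeparatingLeft) (hsplit : ⨆ μ, T.maxGenEigenspace μ = ⊤) (l : K) :
    (ω.restrict (T.maxGenEigenspace l)).SeparatingLeft := by
  intro x hx
  refine Subtype.ext (hsep x fun z => ?_)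
  have : ⨆ μ, T.maxGenEigenspace μ ≤ ker (ω x) := iSup_le fun μ y hy => by
    by_cases hμ : l = μ
    · subst hμ
      exact hx ⟨y, hy⟩
    · exact hT.eq_zero_of_mem_maxGenEigenspace hμ x.2 hy
  exact this (hsplit ▸ Submodule.mem_top)

end LinearMap.IsAdjointPair

def jordanBlock (m : ℕ) (l : K) : Matrix (Fin m) (Fin m) K :=
  Matrix.of fun i j => if i = j then l else if (j : ℕ) = i + 1 then 1 else 0

theorem isJordanNormalForm_jordanBlock (m : ℕ) (l : K) :
    IsJordanNormalForm (jordanBlock m l) := by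
  refine ⟨fun i j h₁ h₂ => ?_, fun i j h => Or.inr ?_⟩
  · simp [jordanBlock, Fin.ext_iff, Ne.symm h₁, h₂]
  · simp [jordanBlock, Fin.ext_iff, h]

theorem IsJordanNormalForm.reindex_fromBlocks {m k : ℕ} {B₁ : Matrix (Fin m) (Fin m) K}
    {B₂ : Matrix (Fin k) (Fin k) K} (h₁ : IsJordanNormalForm B₁) (h₂ : IsJordanNormalForm B₂) :
    IsJordanNormalForm
      ((Matrix.fromBlocks B₁ 0 0 B₂).reindex finSumFinEquiv finSumFinEquiv) := by
  refine ⟨fun i j => ?_, fun i j => ?_⟩ <;>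
    refine Fin.addCases (fun a => ?_) (fun a => ?_) i <;>
    refine Fin.addCases (fun b => ?_) (fun b => ?_) j <;>
    simp only [Matrix.reindex_apply, Matrix.submatrix_apply, finSumFinEquiv_symm_apply_castAdd,
      finSumFinEquiv_symm_apply_natAdd, Matrix.fromBlocks_apply₁₁, Matrix.fromBlocks_apply₁₂,
      Matrix.fromBlocks_apply₂₁, Matrix.fromBlocks_apply₂₂, Matrix.zero_apply, Fin.val_castAdd,
      Fin.val_natAdd, true_or, implies_true]
  · exact h₁.1 a b
  · exact fun h h' => h₂.1 a b (by omega) (by omega)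
  · exact h₁.2 a b
  · exact fun h => h₂.2 a b (by omega)

theorem sum_jordanBlock_smul {m : ℕ} (l : K) (c : Fin m → V) (j : Fin m) :
    ∑ i, jordanBlock m l i j • c i = l • c j + ∑ i : Fin m, if (j : ℕ) = i + 1 then c i else 0 := by
  have h : ∀ i, jordanBlock m l i j • c i =
      (if i = j then l • c i else 0) + if (j : ℕ) = i + 1 then c i else 0 := fun i => by
    simp only [jordanBlock, Matrix.of_apply, Fin.ext_iff]
    split_ifs <;> first | omega | simp
  simp [h, Finset.sum_add_distrib]

theorem sum_jordanBlock_transpose_smul {m : ℕ} (l : K) (c : Fin m → V) (j : Fin m) :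
    ∑ i, jordanBlock m l j i • c i = l • c j + ∑ i : Fin m, if (i : ℕ) = j + 1 then c i else 0 := by
  have h : ∀ i, jordanBlock m l j i • c i =
      (if i = j then l • c i else 0) + if (i : ℕ) = j + 1 then c i else 0 := fun i => by
    simp only [jordanBlock, Matrix.of_apply, Fin.ext_iff]
    split_ifs <;> first | omega | simp
  simp [h, Finset.sum_add_distrib]

theorem Fin.sum_ite_val_eq_add_one {m : ℕ} (g : ℕ → V) (j : Fin m) :
    ∑ i : Fin m, (if (j : ℕ) = i + 1 then g i else 0) =
      if 0 < (j : ℕ) then g (j - 1) else 0 := by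
  rw [Fin.sum_univ_eq_sum_range (fun i => if (j : ℕ) = i + 1 then g i else 0)]
  split_ifs with hj
  · rw [Finset.sum_eq_single ((j : ℕ) - 1) (fun b _ hb => if_neg (by omega))
      (fun h => absurd (Finset.mem_range.mpr (by omega)) h), if_pos (by omega)]
  · exact Finset.sum_eq_zero fun i _ => if_neg (by omega)

theorem Fin.sum_ite_val_eq_val_add_one {m : ℕ} (g : ℕ → V) (j : Fin m) :
    ∑ i : Fin m, (if (i : ℕ) = j + 1 then g i else 0) =
      if (j : ℕ) + 1 < m then g (j + 1) else 0 := by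
  rw [Fin.sum_univ_eq_sum_range (fun i => if i = (j : ℕ) + 1 then g i else 0)]
  split_ifs with hj
  · rw [Finset.sum_ite_eq', if_pos (Finset.mem_range.mpr hj)]
  · exact Finset.sum_eq_zero fun i hi => if_neg (by simp at hi; omega)

section Pairs

variable {ι κ : Type*}

def pairing (ω : LinearMap.BilinForm K V) (e f : ι → V) : V →ₗ[K] (ι → K) × (ι → K) :=
  (LinearMap.pi fun i => ω (e i)).prod (LinearMap.pi fun i => ω (f i))

theorem mem_ker_pairing {ω : LinearMap.BilinForm K V} {e f : ι → V} {x : V} :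
    x ∈ ker (pairing ω e f) ↔ ∀ i, ω (e i) x = 0 ∧ ω (f i) x = 0 := by
  simp [pairing, funext_iff, forall_and]

variable [DecidableEq ι]

structure IsSymplecticPair (ω : LinearMap.BilinForm K V) (e f : ι → V) : Prop where
  left_left : ∀ i j, ω (e i) (e j) = 0
  right_right : ∀ i j, ω (f i) (f j) = 0
  left_right : ∀ i j, ω (e i) (f j) = if i = j then 1 else 0

theorem IsSymplecticPair.apply_sumElim {ω : LinearMap.BilinForm K V} {e f : ι → V}
    (hω : ∀ x y, ω x y = -ω y x) (h : IsSymplecticPair ω e f) (p q : ι ⊕ ι) :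
    ω (Sum.elim e f p) (Sum.elim e f q) = Matrix.fromBlocks 0 1 (-1) 0 p q := by
  rcases p with i | i <;> rcases q with j | j <;>
    simp [h.left_left, h.right_right, h.left_right, hω (f i), Matrix.one_apply, eq_comm]

variable [Fintype ι]

structure IsSymplecticJordanPair (ω : LinearMap.BilinForm K V) (T : Module.End K V)
    (B : Matrix ι ι K) (e f : ι → V) : Prop extends IsSymplecticPair ω e f where
  apply_left : ∀ j, T (e j) = ∑ i, B i j • e i
  apply_right : ∀ j, T (f j) = ∑ i, B j i • f i

variable {ω : LinearMap.BilinForm K V} {T : Module.End K V} {e f : ι → V}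

theorem IsSymplecticJordanPair.apply_sumElim_eq_sum {B : Matrix ι ι K}
    (h : IsSymplecticJordanPair ω T B e f) (q : ι ⊕ ι) :
    T (Sum.elim e f q) = ∑ p, Matrix.fromBlocks B 0 0 Bᵀ p q • Sum.elim e f p := by
  rcases q with j | j <;> simp [Fintype.sum_sum_type, h.apply_left, h.apply_right]

theorem IsSymplecticJordanPair.map {V' : Type*} [AddCommGroup V'] [Module K V']
    {ω' : LinearMap.BilinForm K V'} {T' : Module.End K V'} {B : Matrix ι ι K} {e f : ι → V'}
    (h : IsSymplecticJordanPair ω' T' B e f) (φ : V' →ₗ[K] V)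
    (hω : ∀ x y, ω (φ x) (φ y) = ω' x y) (hT : ∀ x, T (φ x) = φ (T' x)) :
    IsSymplecticJordanPair ω T B (φ ∘ e) (φ ∘ f) where
  left_left i j := by simp [hω, h.left_left]
  right_right i j := by simp [hω, h.right_right]
  left_right i j := by simp [hω, h.left_right]
  apply_left j := by simp [hT, h.apply_left]
  apply_right j := by simp [hT, h.apply_right]

theorem IsSymplecticJordanPair.reindex [Fintype κ] [DecidableEq κ] {B : Matrix ι ι K}
    (h : IsSymplecticJordanPair ω T B e f) (σ : ι ≃ κ) :
    IsSymplecticJordanPair ω T (B.reindex σ σ) (e ∘ σ.symm) (f ∘ σ.symm) where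
  left_left i j := h.left_left _ _
  right_right i j := h.right_right _ _
  left_right i j := by simp [h.left_right]
  apply_left j := by simp [h.apply_left, ← σ.symm.sum_comp]
  apply_right j := by simp [h.apply_right, ← σ.symm.sum_comp]

theorem IsSymplecticJordanPair.sum [Fintype κ] [DecidableEq κ] (hω : ∀ x y, ω x y = -ω y x)
    {B₁ : Matrix ι ι K} {B₂ : Matrix κ κ K} {e₂ f₂ : κ → V} (h₁ : IsSymplecticJordanPair ω T B₁ e f)
    (h₂ : IsSymplecticJordanPair ω T B₂ e₂ f₂) (he₂ : ∀ j, e₂ j ∈ ker (pairing ω e f))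
    (hf₂ : ∀ j, f₂ j ∈ ker (pairing ω e f)) :
    IsSymplecticJordanPair ω T (Matrix.fromBlocks B₁ 0 0 B₂) (Sum.elim e e₂) (Sum.elim f f₂) := by
  simp only [mem_ker_pairing] at he₂ hf₂
  refine ⟨⟨?_, ?_, ?_⟩, ?_, ?_⟩
  · rintro (i | i) (j | j) <;> simp [h₁.left_left, h₂.left_left, (he₂ _ _).1]
    rw [hω, (he₂ _ _).1, neg_zero]
  · rintro (i | i) (j | j) <;> simp [h₁.right_right, h₂.right_right, (hf₂ _ _).2]
    rw [hω, (hf₂ _ _).2, neg_zero]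
  · rintro (i | i) (j | j) <;> simp [h₁.left_right, h₂.left_right, (hf₂ _ _).1]
    rw [hω, (he₂ _ _).2, neg_zero]
  · rintro (j | j) <;> simp [Fintype.sum_sum_type, h₁.apply_left, h₂.apply_left]
  · rintro (j | j) <;> simp [Fintype.sum_sum_type, h₁.apply_right, h₂.apply_right]

theorem IsSymplecticPair.pairing_sum_sub (hω : ∀ x y, ω x y = -ω y x)
    (h : IsSymplecticPair ω e f) (a b : ι → K) :
    pairing ω e f (∑ j, a j • f j - ∑ j, b j • e j) = (a, b) := by
  ext i
  · simp [pairing, h.left_right, h.left_left]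
  · simp [pairing, h.right_right, hω (f i) (e _), h.left_right]

theorem IsSymplecticPair.finrank_ker_pairing [FiniteDimensional K V]
    (hω : ∀ x y, ω x y = -ω y x) (h : IsSymplecticPair ω e f) :
    finrank K (ker (pairing ω e f)) + 2 * Fintype.card ι = finrank K V := by
  have hsurj : range (pairing ω e f) = ⊤ :=
    range_eq_top.mpr fun ab => ⟨_, h.pairing_sum_sub hω ab.1 ab.2⟩
  have := finrank_range_add_finrank_ker (pairing ω e f)
  rw [hsurj, finrank_top, finrank_prod, finrank_fintype_fun_eq_card] at this
  omega

theorem IsSymplecticPair.separatingLeft_restrict_ker_pairing (hω : ∀ x y, ω x y = -ω y x)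
    (h : IsSymplecticPair ω e f) (hsep : ω.SeparatingLeft) :
    (ω.restrict (ker (pairing ω e f))).SeparatingLeft := by
  intro x hx
  have hxef := mem_ker_pairing.mp x.2
  refine Subtype.ext (hsep x fun z => ?_)
  set s := ∑ j, ω (e j) z • f j - ∑ j, ω (f j) z • e j
  have hs : z - s ∈ ker (pairing ω e f) := by
    rw [LinearMap.mem_ker, map_sub, h.pairing_sum_sub hω, sub_eq_zero]
    rfl
  calc ω x z = ω x (z - s) + ω x s := by rw [map_sub, sub_add_cancel]
    _ = 0 := by
      rw [show ω x (z - s) = 0 from hx ⟨_, hs⟩]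
      simp [s, hω x, (hxef _).1, (hxef _).2]

theorem IsSymplecticJordanPair.mapsTo_ker_pairing {B : Matrix ι ι K}
    (h : IsSymplecticJordanPair ω T B e f) (hT : IsAdjointPair ω ω T T) :
    ∀ x ∈ ker (pairing ω e f), T x ∈ ker (pairing ω e f) := by
  simp only [mem_ker_pairing]
  intro x hx i
  rw [← hT, ← hT, h.apply_left, h.apply_right]
  simp [(hx _).1, (hx _).2]

end Pairs

section Chain

variable {ω : LinearMap.BilinForm K V} {N : Module.End K V}

theorem exists_apply_pow_eq_ite (φ : V →ₗ[K] K) {m : ℕ} (hm : N ^ m = 0) {y : V}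
    (hy : φ ((N ^ (m - 1)) y) = 1) :
    ∃ w, ∀ k, φ ((N ^ k) w) = if k = m - 1 then 1 else 0 := by
  have hzero : ∀ k, m ≤ k → ∀ x, (N ^ k) x = 0 := fun k hk x => by
    rw [pow_eq_zero_of_le hk hm, LinearMap.zero_apply]
  suffices ∀ d, ∃ w, ∀ k, m - 1 - d ≤ k → φ ((N ^ k) w) = if k = m - 1 then 1 else 0 by
    obtain ⟨w, hw⟩ := this (m - 1)
    exact ⟨w, fun k => hw k (by omega)⟩
  intro d
  induction d with
  | zero =>
    refine ⟨y, fun k hk => ?_⟩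
    obtain rfl | hk := eq_or_lt_of_le hk
    · simpa using hy
    · rw [hzero k (by omega), map_zero, if_neg (by omega)]
  | succ d ih =>
    -- subtracting `c • N ^ (d + 1) w` fixes the exponent `m - 2 - d` and no larger one
    obtain ⟨w, hw⟩ := ih
    set c := φ ((N ^ (m - 1 - (d + 1))) w)
    refine ⟨w - c • (N ^ (d + 1)) w, fun k hk => ?_⟩
    have hexpand : φ ((N ^ k) (w - c • (N ^ (d + 1)) w)) =
        φ ((N ^ k) w) - c * φ ((N ^ (k + (d + 1))) w) := by
      rw [map_sub, map_smul, ← Module.End.mul_apply, ← pow_add, map_sub, map_smul, smul_eq_mul]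
    rw [hexpand, hw (k + (d + 1)) (by omega)]
    rcases (show k = m - 1 - (d + 1) ∧ d + 1 ≤ m - 1 ∨ m - 1 - d ≤ k by omega) with
      ⟨rfl, hdm⟩ | hk'
    · rw [if_pos (by omega), if_neg (by omega)]
      ring
    · rw [hw k hk', if_neg (show k + (d + 1) ≠ m - 1 by omega)]
      ring

theorem isSymplecticJordanPair_chain (hchar : (2 : K) ≠ 0) (hω : ∀ x y, ω x y = -ω y x)
    (hN : IsAdjointPair ω ω N N) {m : ℕ} (hm : N ^ m = 0) {v w : V}
    (hvw : ∀ k, ω v ((N ^ k) w) = if k = m - 1 then 1 else 0) (l : K) :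
    IsSymplecticJordanPair ω (N + algebraMap K (Module.End K V) l) (jordanBlock m l)
      (fun i => (N ^ (m - 1 - i)) v) (fun i => (N ^ (i : ℕ)) w) where
  left_left i j := hN.apply_pow_apply_pow_eq_zero hchar hω _ _ v
  right_right i j := hN.apply_pow_apply_pow_eq_zero hchar hω _ _ w
  left_right i j := by
    rw [hN.pow, ← Module.End.mul_apply, ← pow_add, hvw]
    exact if_congr (by rw [Fin.ext_iff]; omega) rfl rfl
  apply_left j := by
    have hNm : ∀ k, m ≤ k → (N ^ k) v = 0 := fun k hk => by
      rw [pow_eq_zero_of_le hk hm, LinearMap.zero_apply]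
    rw [sum_jordanBlock_smul, Fin.sum_ite_val_eq_add_one (fun i => (N ^ (m - 1 - i)) v)]
    simp only [LinearMap.add_apply, Module.algebraMap_end_apply, add_comm (l • _)]
    rw [← Module.End.mul_apply, ← pow_succ']
    split_ifs with hj
    · rw [show m - 1 - (j : ℕ) + 1 = m - 1 - ((j : ℕ) - 1) by omega]
    · rw [hNm _ (by omega)]
  apply_right j := by
    have hNm : ∀ k, m ≤ k → (N ^ k) w = 0 := fun k hk => by
      rw [pow_eq_zero_of_le hk hm, LinearMap.zero_apply]
    rw [sum_jordanBlock_transpose_smul, Fin.sum_ite_val_eq_val_add_one (fun i => (N ^ i) w)]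
    simp only [LinearMap.add_apply, Module.algebraMap_end_apply, add_comm (l • _)]
    rw [← Module.End.mul_apply, ← pow_succ']
    split_ifs with hj
    · rfl
    · rw [hNm _ (by omega)]

theorem exists_isSymplecticJordanPair_jordanBlock [Nontrivial V] (hchar : (2 : K) ≠ 0)
    (hω : ∀ x y, ω x y = -ω y x) (hsep : ω.SeparatingLeft) {T : Module.End K V}
    (hT : IsAdjointPair ω ω T T) {l : K} (hnil : IsNilpotent (T - algebraMap K _ l)) :
    ∃ m > 0, ∃ e f : Fin m → V, IsSymplecticJordanPair ω T (jordanBlock m l) e f := by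
  set N := T - algebraMap K (Module.End K V) l
  have hN : IsAdjointPair ω ω N N := fun x y => by simp [N, hT x y]
  set m := nilpotencyClass N
  have hm : N ^ m = 0 := pow_nilpotencyClass hnil
  obtain ⟨y, hy⟩ : ∃ y, (N ^ (m - 1)) y ≠ 0 := by
    by_contra! h
    exact pow_pred_nilpotencyClass hnil (LinearMap.ext h)
  obtain ⟨z, hz⟩ : ∃ z, ω ((N ^ (m - 1)) y) z ≠ 0 := by
    by_contra! h
    exact hy (hsep _ h)
  obtain ⟨w, hw⟩ := exists_apply_pow_eq_ite (ω ((-ω ((N ^ (m - 1)) y) z)⁻¹ • z)) hm (y := y)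
    (by simp [hω z, hz])
  have h := isSymplecticJordanPair_chain hchar hω hN hm hw l
  rw [sub_add_cancel] at h
  exact ⟨m, pos_nilpotencyClass_iff.mpr hnil, _, _, h⟩

end Chain

theorem exists_isSymplecticJordanPair [FiniteDimensional K V] (hchar : (2 : K) ≠ 0)
    {ω : LinearMap.BilinForm K V} (hω : ∀ x y, ω x y = -ω y x) (hsep : ω.SeparatingLeft)
    {T : Module.End K V} (hT : IsAdjointPair ω ω T T) (hsplit : ⨆ μ, T.maxGenEigenspace μ = ⊤) :
    ∃ (k : ℕ) (B : Matrix (Fin k) (Fin k) K) (e f : Fin k → V),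
      2 * k = finrank K V ∧ IsJordanNormalForm B ∧ IsSymplecticJordanPair ω T B e f := by
  induction hd : finrank K V using Nat.strong_induction_on generalizing V with
  | _ d ih =>
  rcases subsingleton_or_nontrivial V with hV | hV
  · exact ⟨0, 0, finZeroElim, finZeroElim, by rw [← hd, finrank_zero_of_subsingleton],
      ⟨finZeroElim, finZeroElim⟩,
      ⟨⟨finZeroElim, finZeroElim, finZeroElim⟩, finZeroElim, finZeroElim⟩⟩
  obtain ⟨l, hl⟩ := Module.End.exists_hasEigenvalue_of_genEigenspace_eq_top ⊤ hsplit
  set U := T.maxGenEigenspace l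
  have hTU : ∀ x ∈ U, T x ∈ U := Module.End.mapsTo_maxGenEigenspace_of_comm (Commute.refl T) l
  have : Nontrivial U := Submodule.nontrivial_iff_ne_bot.mpr
    (ne_bot_of_le_ne_bot hl ((T.genEigenspace l).mono le_top))
  have hnil : IsNilpotent (T.restrict hTU - algebraMap K _ l) := by
    convert Module.End.isNilpotent_restrict_maxGenEigenspace_sub_algebraMap T l using 1
    ext
    rfl
  obtain ⟨m, hm, e₀, f₀, h₀⟩ := exists_isSymplecticJordanPair_jordanBlock hchar
    (ω := ω.restrict U) (fun x y => hω x y)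
    (hT.separatingLeft_restrict_maxGenEigenspace hsep hsplit l) (T := T.restrict hTU)
    (fun x y => hT x y) hnil
  have h₁ := h₀.map U.subtype (fun _ _ => rfl) (fun _ => rfl)
  have hrank := h₁.finrank_ker_pairing hω
  rw [Fintype.card_fin, hd] at hrank
  -- recurse on the `ω`-orthogonal complement `ker (pairing ω _ _)` of the block
  obtain ⟨k, B, e, f, hk, hB, h₂⟩ := ih _ (by omega) (ω := ω.restrict _) (fun x y => hω x y)
    (h₁.separatingLeft_restrict_ker_pairing hω hsep) (T := T.restrict (h₁.mapsTo_ker_pairing hT))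
    (fun x y => hT x y) (Module.End.genEigenspace_restrict_eq_top _ hsplit) rfl
  have h₂' := h₂.map (Submodule.subtype _) (fun _ _ => rfl) (fun _ => rfl)
  exact ⟨m + k, _, _, _, by omega, (isJordanNormalForm_jordanBlock m l).reindex_fromBlocks hB,
    (h₁.sum hω h₂' (fun j => (e j).2) (fun j => (f j).2)).reindex finSumFinEquiv⟩

section MatrixForm

variable {ι n : Type*} [Fintype n]

theorem Matrix.toLinearMap₂'_apply_eq_neg_of_transpose_eq_neg [DecidableEq n]
    {M : Matrix n n K} (hM : Mᵀ = -M) (x y : n → K) :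
    Matrix.toLinearMap₂' K M x y = -Matrix.toLinearMap₂' K M y x := by
  rw [Matrix.toLinearMap₂'_apply', Matrix.toLinearMap₂'_apply', Matrix.dotProduct_mulVec y,
    dotProduct_comm, ← Matrix.mulVec_transpose, hM, Matrix.neg_mulVec, neg_dotProduct, neg_neg]

theorem Matrix.of_mul_mul_transpose_of [DecidableEq n] (M : Matrix n n K) (b : ι → n → K) :
    Matrix.of b * M * (Matrix.of b)ᵀ =
      Matrix.of fun p q => Matrix.toLinearMap₂' K M (b p) (b q) := by
  ext p q
  simp [Matrix.mul_apply, Matrix.toLinearMap₂'_apply', dotProduct, Matrix.mulVec,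
    Finset.mul_sum, Finset.sum_mul]
  rw [Finset.sum_comm]
  exact Finset.sum_congr rfl fun _ _ => Finset.sum_congr rfl fun _ _ => by ring

theorem Matrix.mul_transpose_of_eq [Fintype ι] (A : Matrix n n K) (D : Matrix ι ι K)
    (b : ι → n → K) (h : ∀ q, A *ᵥ b q = ∑ p, D p q • b p) :
    A * (Matrix.of b)ᵀ = (Matrix.of b)ᵀ * D := by
  ext i q
  have := congrFun (h q) i
  simp only [Matrix.mulVec, dotProduct, Finset.sum_apply, Pi.smul_apply, smul_eq_mul] at this
  simp [Matrix.mul_apply, this, mul_comm]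

end MatrixForm

end

theorem symplectic_spectral_matrix_split_general
    {K : Type*} [Field K] (hchar : (2 : K) ≠ 0) (n : ℕ)
    (A : Matrix (Fin n ⊕ Fin n) (Fin n ⊕ Fin n) K)
    (Ω : Matrix (Fin n ⊕ Fin n) (Fin n ⊕ Fin n) K)
    (hΩ : Ω = Matrix.fromBlocks 0 1 (-1) 0)
    (hA : A.transpose = Ω * A * Ω⁻¹)
    (hsplit : Polynomial.Splits A.charpoly) :
    ∃ C : Matrix (Fin n ⊕ Fin n) (Fin n ⊕ Fin n) K,
      C.transpose * Ω * C = Ω ∧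
      ∃ B : Matrix (Fin n) (Fin n) K, IsJordanNormalForm B ∧
        C⁻¹ * A * C = Matrix.fromBlocks B 0 0 B.transpose := by
  have hΩJ : Ω = -Matrix.J (Fin n) K := by
    rw [hΩ, Matrix.J]
    simp [Matrix.fromBlocks_neg]
  have hΩΩ : Ω * -Ω = 1 := by rw [hΩJ, neg_neg, neg_mul, Matrix.J_squared, neg_neg]
  have hAΩ : Aᵀ * Ω = Ω * A := by
    rw [hA, Matrix.inv_eq_right_inv hΩΩ, Matrix.mul_assoc, mul_eq_one_comm.mp hΩΩ, Matrix.mul_one]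
  have hω := Matrix.toLinearMap₂'_apply_eq_neg_of_transpose_eq_neg (K := K)
    (by rw [hΩJ, Matrix.transpose_neg, Matrix.J_transpose] : Ωᵀ = -Ω)
  obtain ⟨k, B, e, f, hk, hB, h⟩ := exists_isSymplecticJordanPair hchar hω
    (separatingLeft_toLinearMap₂'_iff_det_ne_zero.mpr
      (Matrix.isUnit_det_of_right_inverse hΩΩ).ne_zero)
    ((isAdjointPair_toLinearMap₂' _ _ _ _).mpr hAΩ)
    (Module.End.iSup_maxGenEigenspace_eq_top_of_splits _ (by rwa [Matrix.charpoly_toLin']))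
  obtain rfl : k = n := by
    simp at hk
    omega
  set C := (Matrix.of (Sum.elim e f))ᵀ
  have hsymp : Cᵀ * Ω * C = Ω := by
    ext p q
    rw [Matrix.transpose_transpose, Matrix.of_mul_mul_transpose_of, Matrix.of_apply,
      h.apply_sumElim hω, hΩ]
  have hC : IsUnit C.det := SymplecticGroup.symplectic_det
    (SymplecticGroup.mem_iff'.mpr (by simpa [hΩJ] using hsymp))
  refine ⟨C, hsymp, B, hB, ?_⟩
  rw [Matrix.mul_assoc, Matrix.mul_transpose_of_eq A _ _ fun q => by
      rw [← Matrix.toLin'_apply, h.apply_sumElim_eq_sum],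
    ← Matrix.mul_assoc, Matrix.nonsing_inv_mul _ hC, Matrix.one_mul]

theorem symplectic_spectral_matrix_split
    {K : Type*} [Field K] (hchar : (2 : K) ≠ 0) (n : ℕ) (hn : 0 < n)
    (A : Matrix (Fin n ⊕ Fin n) (Fin n ⊕ Fin n) K)
    (Ω : Matrix (Fin n ⊕ Fin n) (Fin n ⊕ Fin n) K)
    (hΩ : Ω = Matrix.fromBlocks 0 1 (-1) 0)
    (hA : A.transpose = Ω * A * Ω⁻¹)
    (hsplit : Polynomial.Splits A.charpoly) :
    ∃ C : Matrix (Fin n ⊕ Fin n) (Fin n ⊕ Fin n) K,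
      C.transpose * Ω * C = Ω ∧
      ∃ B : Matrix (Fin n) (Fin n) K, IsJordanNormalForm B ∧
        C⁻¹ * A * C = Matrix.fromBlocks B 0 0 B.transpose :=
  symplectic_spectral_matrix_split_general hchar n A Ω hΩ hA hsplit
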